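/- (Proposition 3: strong duality for the volume-preserving STD subproblem, with the additive constant corrected.) Let Ω be a finite nonempty set with |Ω| elements, I ≥ 1, ε > 0, let c : Ω → ℝ^I, and let V ∈ ℝ^I satisfy V_i > 0 for every i and ∑_{i=1}^I V_i = |Ω|. Let U_V be the set of fields u : Ω → ℝ^I with u(x) ∈ U for every x and ∑_{x ∈ Ω} u_i(x) = V_i for every i. Then inf_{u ∈ U_V} ∑_{x ∈ Ω} ∑_{i=1}^I [ −c_i(x) u_i(x) + ε u_i(x) log(u_i(x)) ] = sup_{q ∈ ℝ^I} [ ∑_{i=1}^I q_i V_i − ε ∑_{x ∈ Ω} log( ∑_{i=1}^I exp((c_i(x) + q_i)/ε) ) ]. -/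

import Mathlib

/-!
Gibbs' variational principle `⟨a, u⟩ - logSumExp ε a ≤ ε ∑ᵢ uᵢ log uᵢ` on the simplex, with
equality at `u = softmax ε a`, gives weak duality pixel by pixel. Because `∑ᵢ Vᵢ = |Ω|` the dual
objective is invariant under adding a constant to `q`, and because every `Vᵢ > 0` it is bounded
above by `Vₖ qₖ + C` once `max q = 0`; so it attains its maximum on a compact box. At a maximiser
`q` the first-order condition says that the softmax field `x ↦ softmax ε (c x + q)` has volumes
`V`: it is primal feasible and closes the duality gap.
-/

open Real Finset

lemma mul_log_le_mul_log_self_add_sub {x m : ℝ} (hx : 0 ≤ x) (hm : 0 < m) :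
    x * log m ≤ x * log x + m - x := by
  rcases hx.eq_or_lt with rfl | hx
  · simpa using hm.le
  · have h := mul_le_mul_of_nonneg_left (self_sub_one_le_mul_log (div_pos hx hm).le) hm.le
    rw [log_div hx.ne' hm.ne'] at h
    field_simp at h
    linarith

lemma sum_mul_log_le_sum_mul_log_self {ι : Type*} [Fintype ι] {u p : ι → ℝ}
    (hu : u ∈ stdSimplex ℝ ι) (hp : ∀ i, 0 < p i) (hp1 : ∑ i, p i = 1) :
    ∑ i, u i * log (p i) ≤ ∑ i, u i * log (u i) := by
  have h := sum_le_sum fun i (_ : i ∈ univ) => mul_log_le_mul_log_self_add_sub (hu.1 i) (hp i)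
  simpa only [sum_sub_distrib, sum_add_distrib, hp1, hu.2, add_sub_cancel_right] using h

section LogSumExp

variable {ι : Type*} [Fintype ι] {ε : ℝ}

noncomputable def logSumExp (ε : ℝ) (a : ι → ℝ) : ℝ := ε * log (∑ i, exp (a i / ε))

noncomputable def softmax (ε : ℝ) (a : ι → ℝ) : ι → ℝ :=
  fun i => exp (a i / ε) / ∑ j, exp (a j / ε)

variable [Nonempty ι]

lemma sum_exp_div_pos (ε : ℝ) (a : ι → ℝ) : 0 < ∑ i, exp (a i / ε) :=
  sum_pos (fun _ _ => exp_pos _) univ_nonempty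

lemma softmax_pos (ε : ℝ) (a : ι → ℝ) (i : ι) : 0 < softmax ε a i :=
  div_pos (exp_pos _) (sum_exp_div_pos ε a)

lemma sum_softmax (ε : ℝ) (a : ι → ℝ) : ∑ i, softmax ε a i = 1 := by
  simp only [softmax, ← sum_div, div_self (sum_exp_div_pos ε a).ne']

lemma softmax_mem_stdSimplex (ε : ℝ) (a : ι → ℝ) : softmax ε a ∈ stdSimplex ℝ ι :=
  ⟨fun i => (softmax_pos ε a i).le, sum_softmax ε a⟩

lemma mul_log_softmax (hε : ε ≠ 0) (a : ι → ℝ) (i : ι) :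
    ε * log (softmax ε a i) = a i - logSumExp ε a := by
  rw [softmax, log_div (exp_pos _).ne' (sum_exp_div_pos ε a).ne', log_exp, logSumExp,
    mul_sub, mul_div_cancel₀ _ hε]

lemma mul_sum_mul_log_softmax (hε : ε ≠ 0) (a u : ι → ℝ) :
    ε * ∑ i, u i * log (softmax ε a i) = ∑ i, a i * u i - logSumExp ε a * ∑ i, u i := by
  simp only [mul_sum, mul_left_comm ε, mul_log_softmax hε, ← sum_sub_distrib]
  exact sum_congr rfl fun i _ => by ring

lemma le_logSumExp (hε : 0 < ε) (a : ι → ℝ) (i : ι) : a i ≤ logSumExp ε a := by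
  have h : exp (a i / ε) ≤ ∑ j, exp (a j / ε) :=
    single_le_sum (f := fun j => exp (a j / ε)) (fun j _ => (exp_pos _).le) (mem_univ i)
  rw [logSumExp, ← div_le_iff₀' hε, ← exp_le_exp, exp_log (sum_exp_div_pos ε a)]
  exact h

lemma logSumExp_add_const (hε : ε ≠ 0) (a : ι → ℝ) (s : ℝ) :
    logSumExp ε (a + fun _ => s) = logSumExp ε a + s := by
  have h : ∑ i, exp ((a i + s) / ε) = exp (s / ε) * ∑ i, exp (a i / ε) := by
    rw [mul_sum]
    exact sum_congr rfl fun i _ => by rw [← exp_add, add_div, add_comm]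
  simp only [logSumExp, Pi.add_apply]
  rw [h, log_mul (exp_pos _).ne' (sum_exp_div_pos ε a).ne', log_exp, mul_add,
    mul_div_cancel₀ _ hε, add_comm]

lemma continuous_logSumExp (ε : ℝ) : Continuous (logSumExp ε : (ι → ℝ) → ℝ) :=
  continuous_const.mul <| Continuous.log (by fun_prop) fun a => (sum_exp_div_pos ε a).ne'

lemma hasDerivAt_logSumExp_add_smul (hε : ε ≠ 0) (a e : ι → ℝ) :
    HasDerivAt (fun t : ℝ => logSumExp ε (a + t • e)) (∑ i, softmax ε a i * e i) 0 := by
  have hZ : HasDerivAt (fun t : ℝ => ∑ i, exp ((a + t • e) i / ε))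
      (∑ i, exp (a i / ε) * (e i / ε)) 0 := by
    refine HasDerivAt.fun_sum fun i _ => ?_
    have h := (((hasDerivAt_id (0 : ℝ)).mul_const (e i)).const_add (a i)).div_const ε
    simpa using h.exp
  have h := (hZ.log (by simpa using (sum_exp_div_pos ε a).ne')).const_mul ε
  refine h.congr_deriv ?_
  simp only [zero_smul, add_zero, mul_div_assoc', mul_sum, sum_div, softmax]
  exact sum_congr rfl fun i _ => by field_simp

lemma inner_sub_logSumExp_le (hε : 0 < ε) (a : ι → ℝ) {u : ι → ℝ} (hu : u ∈ stdSimplex ℝ ι) :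
    ∑ i, a i * u i - logSumExp ε a ≤ ε * ∑ i, u i * log (u i) := by
  have h := mul_le_mul_of_nonneg_left
    (sum_mul_log_le_sum_mul_log_self hu (softmax_pos ε a) (sum_softmax ε a)) hε.le
  rwa [mul_sum_mul_log_softmax hε.ne', hu.2, mul_one] at h

lemma inner_softmax_sub_logSumExp (hε : ε ≠ 0) (a : ι → ℝ) :
    ∑ i, a i * softmax ε a i - logSumExp ε a
      = ε * ∑ i, softmax ε a i * log (softmax ε a i) := by
  rw [mul_sum_mul_log_softmax hε, sum_softmax, mul_one]

end LogSumExp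

section Duality

variable {Ω ι : Type*} [Fintype Ω] [Fintype ι] {ε : ℝ} (c : Ω → ι → ℝ) {V : ι → ℝ}

noncomputable def primalEnergy (ε : ℝ) (c u : Ω → ι → ℝ) : ℝ :=
  ∑ x, ∑ i, (-(c x i * u x i) + ε * u x i * log (u x i))

noncomputable def dualObjective (ε : ℝ) (c : Ω → ι → ℝ) (V q : ι → ℝ) : ℝ :=
  ∑ i, q i * V i - ∑ x, logSumExp ε (c x + q)

lemma primalEnergy_sub_dualObjective {u : Ω → ι → ℝ} (hu : ∀ i, ∑ x, u x i = V i)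
    (q : ι → ℝ) :
    primalEnergy ε c u - dualObjective ε c V q
      = ∑ x, (ε * ∑ i, u x i * log (u x i)
          - (∑ i, (c x + q) i * u x i - logSumExp ε (c x + q))) := by
  have hq : ∑ i, q i * V i = ∑ x, ∑ i, q i * u x i := by
    rw [sum_comm]; simp only [← mul_sum, hu]
  simp only [primalEnergy, dualObjective, hq, Pi.add_apply, add_mul, mul_sum, sum_add_distrib,
    sum_sub_distrib, sum_neg_distrib, mul_assoc]
  ring

variable [Nonempty ι]

lemma dualObjective_le_primalEnergy (hε : 0 < ε) {u : Ω → ι → ℝ}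
    (hu : ∀ x, u x ∈ stdSimplex ℝ ι) (hV : ∀ i, ∑ x, u x i = V i) (q : ι → ℝ) :
    dualObjective ε c V q ≤ primalEnergy ε c u := by
  have hgap := primalEnergy_sub_dualObjective (ε := ε) c hV q
  have : 0 ≤ primalEnergy ε c u - dualObjective ε c V q :=
    hgap ▸ sum_nonneg fun x _ => sub_nonneg.2 (inner_sub_logSumExp_le hε _ (hu x))
  linarith

lemma primalEnergy_softmax (hε : ε ≠ 0) {q : ι → ℝ}
    (hV : ∀ i, ∑ x, softmax ε (c x + q) i = V i) :
    primalEnergy ε c (fun x => softmax ε (c x + q)) = dualObjective ε c V q := by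
  rw [← sub_eq_zero, primalEnergy_sub_dualObjective c hV q]
  exact sum_eq_zero fun x _ => by rw [inner_softmax_sub_logSumExp hε, sub_self]

lemma dualObjective_add_const (hε : ε ≠ 0) (hV : ∑ i, V i = Fintype.card Ω) (q : ι → ℝ)
    (s : ℝ) : dualObjective ε c V (q + fun _ => s) = dualObjective ε c V q := by
  simp only [dualObjective, ← add_assoc, logSumExp_add_const hε, sum_add_distrib, Pi.add_apply,
    add_mul, ← mul_sum, hV, sum_const, card_univ, nsmul_eq_mul]
  ring

lemma dualObjective_le_of_nonpos (hε : 0 < ε) (hV : ∀ i, 0 ≤ V i) {q : ι → ℝ}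
    (hq : ∀ i, q i ≤ 0) {j : ι} (hj : q j = 0) (k : ι) :
    dualObjective ε c V q ≤ V k * q k - ∑ x, c x j := by
  have hlin : ∑ i, q i * V i ≤ q k * V k := by
    have := single_le_sum (f := fun i => -(q i * V i))
      (fun i _ => neg_nonneg.2 (mul_nonpos_of_nonpos_of_nonneg (hq i) (hV i))) (mem_univ k)
    rw [sum_neg_distrib] at this
    linarith
  have hlse : ∑ x, c x j ≤ ∑ x, logSumExp ε (c x + q) :=
    sum_le_sum fun x _ => by simpa [hj] using le_logSumExp hε (c x + q) j
  rw [dualObjective]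
  linarith

lemma continuous_dualObjective (ε : ℝ) (V : ι → ℝ) : Continuous (dualObjective ε c V) :=
  (continuous_finsetSum _ fun i _ => (continuous_apply i).mul continuous_const).sub <|
    continuous_finsetSum _ fun _ _ =>
      (continuous_logSumExp ε).comp (continuous_const.add continuous_id)

lemma hasDerivAt_dualObjective_add_smul (hε : ε ≠ 0) (q e : ι → ℝ) :
    HasDerivAt (fun t : ℝ => dualObjective ε c V (q + t • e))
      (∑ i, e i * V i - ∑ x, ∑ i, softmax ε (c x + q) i * e i) 0 := by
  have hlin : HasDerivAt (fun t : ℝ => ∑ i, (q i + t * e i) * V i) (∑ i, e i * V i) 0 :=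
    HasDerivAt.fun_sum fun i _ => by
      simpa using (((hasDerivAt_id (0 : ℝ)).mul_const (e i)).const_add (q i)).mul_const (V i)
  have h := hlin.fun_sub <| HasDerivAt.fun_sum (u := univ) fun x _ =>
    hasDerivAt_logSumExp_add_smul hε (c x + q) e
  simpa only [dualObjective, add_assoc, Pi.add_apply, Pi.smul_apply, smul_eq_mul] using h

lemma sum_softmax_eq_of_forall_dualObjective_le (hε : ε ≠ 0) {q : ι → ℝ}
    (hq : ∀ q', dualObjective ε c V q' ≤ dualObjective ε c V q) (i : ι) :
    ∑ x, softmax ε (c x + q) i = V i := by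
  classical
  have hmax : IsLocalMax (fun t : ℝ => dualObjective ε c V (q + t • Pi.single i 1)) 0 :=
    Filter.Eventually.of_forall fun t => by simpa using hq _
  have := hmax.hasDerivAt_eq_zero (hasDerivAt_dualObjective_add_smul c hε q (Pi.single i 1))
  simp only [Pi.single_apply, ite_mul, one_mul, zero_mul, sum_ite_eq', mem_univ, if_true,
    mul_ite, mul_one, mul_zero] at this
  linarith

lemma exists_forall_dualObjective_le (hε : 0 < ε) (hV_pos : ∀ i, 0 < V i)
    (hV_sum : ∑ i, V i = Fintype.card Ω) :
    ∃ q, ∀ q', dualObjective ε c V q' ≤ dualObjective ε c V q := by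
  set D := dualObjective ε c V
  obtain ⟨C, hC⟩ := Finite.exists_le fun j => -∑ x, c x j
  have hbound : ∀ q j k, (∀ i, q i ≤ 0) → q j = 0 → D q ≤ V k * q k + C := fun q j k hq hj =>
    (dualObjective_le_of_nonpos c hε (fun i => (hV_pos i).le) hq hj k).trans (by linarith [hC j])
  set K : Set (ι → ℝ) := Set.univ.pi fun k => Set.Icc (-((C - D 0) / V k)) 0
  have h0 : (0 : ι → ℝ) ∈ K := fun k _ => by
    have := hbound 0 k k (fun _ => le_rfl) rfl
    simp only [Pi.zero_apply, mul_zero, zero_add] at this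
    exact ⟨neg_nonpos.2 (div_nonneg (sub_nonneg.2 this) (hV_pos k).le), le_rfl⟩
  obtain ⟨q₀, -, hq₀⟩ := (isCompact_univ_pi fun _ => isCompact_Icc).exists_isMaxOn ⟨0, h0⟩
    (continuous_dualObjective c ε V).continuousOn
  refine ⟨q₀, fun q => ?_⟩
  -- normalise `q` by shifting its largest coordinate to `0`
  obtain ⟨j, hj⟩ := Finite.exists_max q
  set q' := q + fun _ => -q j
  rw [← show D q' = D q from dualObjective_add_const c hε.ne' hV_sum q (-q j)]
  by_cases hq' : D q' ≤ D 0
  · exact hq'.trans (hq₀ h0)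
  refine hq₀ fun k _ => ⟨?_, by simp [q', hj k]⟩
  have := hbound q' j k (fun i => by simp [q', hj i]) (by simp [q'])
  rw [neg_le, le_div_iff₀ (hV_pos k)]
  linarith [not_le.1 hq']

end Duality

theorem vp_std_strong_duality_general
    (Ω : Type*) [Fintype Ω] (I : ℕ) (hI : 1 ≤ I) (ε : ℝ) (hε : 0 < ε)
    (c : Ω → Fin I → ℝ) (V : Fin I → ℝ)
    (hV_pos : ∀ i, 0 < V i) (hV_sum : ∑ i, V i = (Fintype.card Ω : ℝ)) :
    sInf {y : ℝ | ∃ u : Ω → Fin I → ℝ,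
        (∀ x, (∀ i, 0 ≤ u x i) ∧ ∑ i, u x i = 1) ∧
        (∀ i, ∑ x : Ω, u x i = V i) ∧
        y = ∑ x : Ω, ∑ i, (-(c x i * u x i) + ε * u x i * Real.log (u x i))}
      = sSup {y : ℝ | ∃ q : Fin I → ℝ,
        y = (∑ i, q i * V i)
          - ε * ∑ x : Ω, Real.log (∑ i, Real.exp ((c x i + q i) / ε))} := by
  have : Nonempty (Fin I) := ⟨⟨0, hI⟩⟩
  obtain ⟨q, hq⟩ := exists_forall_dualObjective_le c hε hV_pos hV_sum
  have hV : ∀ i, ∑ x, softmax ε (c x + q) i = V i :=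
    sum_softmax_eq_of_forall_dualObjective_le c hε.ne' hq
  have hdual : ∀ q', (∑ i, q' i * V i)
      - ε * ∑ x, log (∑ i, exp ((c x i + q' i) / ε)) = dualObjective ε c V q' := fun q' => by
    simp only [dualObjective, logSumExp, mul_sum, Pi.add_apply]
  rw [IsLeast.csInf_eq (a := primalEnergy ε c fun x => softmax ε (c x + q)) ?least,
    IsGreatest.csSup_eq (a := dualObjective ε c V q) ?greatest, primalEnergy_softmax c hε.ne' hV]
  case least =>
    refine ⟨⟨_, fun x => softmax_mem_stdSimplex ε _, hV, rfl⟩, ?_⟩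
    rintro _ ⟨u, hu, hVu, rfl⟩
    exact (primalEnergy_softmax c hε.ne' hV).trans_le (dualObjective_le_primalEnergy c hε hu hVu q)
  case greatest =>
    refine ⟨⟨q, (hdual q).symm⟩, ?_⟩
    rintro _ ⟨q', rfl⟩
    exact (hdual q').trans_le (hq q')

/-- Proposition 3 (strong duality for the volume-preserving STD subproblem): for volumes
`Vᵢ > 0` with `∑ᵢ Vᵢ = |Ω|`, the infimum of the entropic primal energy over the
volume-constrained simplex fields equals the supremum of the dual objective
`q ↦ ⟨q,V⟩ - ε ∑ₓ log ∑ᵢ exp((cᵢ(x)+qᵢ)/ε)`. -/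
theorem vp_std_strong_duality
    (Ω : Type*) [Fintype Ω] [Nonempty Ω] (I : ℕ) (hI : 1 ≤ I) (ε : ℝ) (hε : 0 < ε)
    (c : Ω → Fin I → ℝ) (V : Fin I → ℝ)
    (hV_pos : ∀ i, 0 < V i) (hV_sum : ∑ i, V i = (Fintype.card Ω : ℝ)) :
    sInf {y : ℝ | ∃ u : Ω → Fin I → ℝ,
        (∀ x, (∀ i, 0 ≤ u x i) ∧ ∑ i, u x i = 1) ∧
        (∀ i, ∑ x : Ω, u x i = V i) ∧
        y = ∑ x : Ω, ∑ i, (-(c x i * u x i) + ε * u x i * Real.log (u x i))}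
      = sSup {y : ℝ | ∃ q : Fin I → ℝ,
        y = (∑ i, q i * V i)
          - ε * ∑ x : Ω, Real.log (∑ i, Real.exp ((c x i + q i) / ε))} :=
  vp_std_strong_duality_general Ω I hI ε hε c V hV_pos hV_sum
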